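/- Let X be the random variable whose distribution is given by the descending plane partition generating function ∏_{i=0}^{n-1} [3i+1]!_q / [n+i]!_q. Then E[X] = n(n²−1)/6 and Var(X) = n²(n²−1)/12. -/
import Mathlib


open Polynomial

/-- The `q`-integer `[m]_q = 1 + q + ⋯ + q^{m-1}` as a polynomial over `ℚ`. -/
noncomputable def qInt (m : ℕ) : Polynomial ℚ :=
  ∑ j ∈ Finset.range m, Polynomial.X ^ j

/-- The `q`-factorial `[m]!_q = ∏_{j=1}^m [j]_q` as a polynomial over `ℚ`. -/
noncomputable def qFactorial (m : ℕ) : Polynomial ℚ :=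
  ∏ j ∈ Finset.range m, qInt (j + 1)

/-- Expectation of the random variable taking value `j` with probability
proportional to the coefficient of `q^j` in `F`. -/
noncomputable def polyExp (F : Polynomial ℚ) : ℚ :=
  (∑ j ∈ Finset.range (F.natDegree + 1), (j : ℚ) * F.coeff j) / F.eval 1

/-- Variance of the random variable taking value `j` with probability
proportional to the coefficient of `q^j` in `F`. -/
noncomputable def polyVar (F : Polynomial ℚ) : ℚ :=
  (∑ j ∈ Finset.range (F.natDegree + 1), (j : ℚ) ^ 2 * F.coeff j) / F.eval 1
    - polyExp F ^ 2

/-! ### Auxiliary machinery -/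

/-- `F'(1)/F(1)`, the expectation. -/
noncomputable def ee (p : Polynomial ℚ) : ℚ := p.derivative.eval 1 / p.eval 1

/-- The variance, expressed via derivatives at `1`. -/
noncomputable def vv (p : Polynomial ℚ) : ℚ :=
  (p.derivative.derivative.eval 1) / p.eval 1 + ee p - ee p ^ 2

lemma sum_coeff_mul (p : Polynomial ℚ) :
    ∑ j ∈ Finset.range (p.natDegree + 1), (j : ℚ) * p.coeff j = p.derivative.eval 1 := by
  conv_rhs => rw [p.as_sum_range' (p.natDegree + 1) (Nat.lt_succ_self _)]
  rw [derivative_sum]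
  simp only [derivative_monomial, eval_finset_sum, eval_monomial, one_pow, mul_one]
  exact Finset.sum_congr rfl fun j _ => by ring

lemma sum_coeff_sq (p : Polynomial ℚ) :
    ∑ j ∈ Finset.range (p.natDegree + 1), (j : ℚ) ^ 2 * p.coeff j
      = p.derivative.derivative.eval 1 + p.derivative.eval 1 := by
  conv_rhs => rw [p.as_sum_range' (p.natDegree + 1) (Nat.lt_succ_self _)]
  rw [derivative_sum, derivative_sum]
  simp only [derivative_monomial, eval_finset_sum, eval_monomial, one_pow, mul_one]
  rw [← Finset.sum_add_distrib]
  refine Finset.sum_congr rfl fun j _ => ?_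
  rcases j with _ | j
  · simp
  · push_cast [Nat.succ_sub_one]; ring

lemma polyExp_eq_ee (F : Polynomial ℚ) : polyExp F = ee F := by
  rw [polyExp, sum_coeff_mul, ee]

lemma polyVar_eq_vv (F : Polynomial ℚ) : polyVar F = vv F := by
  rw [polyVar, sum_coeff_sq, polyExp_eq_ee, vv, ee, add_div]

lemma ee_mul (p q : Polynomial ℚ) (hp : p.eval 1 ≠ 0) (hq : q.eval 1 ≠ 0) :
    ee (p * q) = ee p + ee q := by
  unfold ee
  rw [derivative_mul]
  simp only [eval_add, eval_mul]
  field_simp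

lemma vv_mul (p q : Polynomial ℚ) (hp : p.eval 1 ≠ 0) (hq : q.eval 1 ≠ 0) :
    vv (p * q) = vv p + vv q := by
  unfold vv ee
  rw [derivative_mul, derivative_add, derivative_mul, derivative_mul]
  simp only [eval_add, eval_mul]
  field_simp
  ring

lemma ee_prod (n : ℕ) (f : ℕ → Polynomial ℚ) (h : ∀ i, (f i).eval 1 ≠ 0) :
    ee (∏ i ∈ Finset.range n, f i) = ∑ i ∈ Finset.range n, ee (f i) := by
  induction n with
  | zero => simp [ee]
  | succ n ih =>
    rw [Finset.prod_range_succ, Finset.sum_range_succ, ee_mul _ _ ?_ (h n), ih]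
    rw [eval_prod]
    exact Finset.prod_ne_zero_iff.2 fun i _ => h i

lemma vv_prod (n : ℕ) (f : ℕ → Polynomial ℚ) (h : ∀ i, (f i).eval 1 ≠ 0) :
    vv (∏ i ∈ Finset.range n, f i) = ∑ i ∈ Finset.range n, vv (f i) := by
  induction n with
  | zero => simp [vv, ee]
  | succ n ih =>
    rw [Finset.prod_range_succ, Finset.sum_range_succ, vv_mul _ _ ?_ (h n), ih]
    rw [eval_prod]
    exact Finset.prod_ne_zero_iff.2 fun i _ => h i

lemma sum_id (m : ℕ) : ∑ j ∈ Finset.range m, (j : ℚ) = m * (m - 1) / 2 := by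
  induction m with
  | zero => simp
  | succ m ih => rw [Finset.sum_range_succ, ih]; push_cast; ring

lemma sum_sq (m : ℕ) : ∑ j ∈ Finset.range m, (j : ℚ) ^ 2
    = m * (m - 1) * (2 * m - 1) / 6 := by
  induction m with
  | zero => simp
  | succ m ih => rw [Finset.sum_range_succ, ih]; push_cast; ring

lemma sum_cube (m : ℕ) : ∑ j ∈ Finset.range m, (j : ℚ) ^ 3
    = (m : ℚ) ^ 2 * (m - 1) ^ 2 / 4 := by
  induction m with
  | zero => simp
  | succ m ih => rw [Finset.sum_range_succ, ih]; push_cast; ring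

lemma sum_poly3 (a b c d : ℚ) (n : ℕ) :
    ∑ i ∈ Finset.range n, (a + b * (i : ℚ) + c * (i : ℚ) ^ 2 + d * (i : ℚ) ^ 3)
      = a * n + b * (n * (n - 1) / 2) + c * (n * (n - 1) * (2 * n - 1) / 6)
        + d * ((n : ℚ) ^ 2 * (n - 1) ^ 2 / 4) := by
  rw [Finset.sum_add_distrib, Finset.sum_add_distrib, Finset.sum_add_distrib,
    ← Finset.mul_sum, ← Finset.mul_sum, ← Finset.mul_sum,
    sum_id, sum_sq, sum_cube, Finset.sum_const, Finset.card_range]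
  ring

lemma qInt_eval (m : ℕ) : (qInt m).eval 1 = m := by
  simp [qInt, eval_finset_sum]

lemma qInt_d1 (m : ℕ) : (qInt m).derivative.eval 1 = m * (m - 1) / 2 := by
  rw [qInt, derivative_sum]
  simp only [derivative_X_pow, eval_finset_sum, eval_mul, eval_pow, eval_C, eval_X,
    one_pow, mul_one]
  exact sum_id m

lemma qInt_d2 (m : ℕ) : (qInt m).derivative.derivative.eval 1
    = m * (m - 1) * (m - 2) / 3 := by
  rw [qInt, derivative_sum]
  simp only [derivative_X_pow]
  rw [derivative_sum]
  simp only [derivative_C_mul, derivative_X_pow, eval_finset_sum, eval_mul, eval_pow,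
    eval_C, eval_X, one_pow, mul_one]
  have : ∀ j : ℕ, (j : ℚ) * ((j - 1 : ℕ) : ℚ) = (j : ℚ) ^ 2 - j := by
    intro j; rcases j with _ | j
    · simp
    · push_cast [Nat.succ_sub_one]; ring
  rw [Finset.sum_congr rfl fun j _ => this j, Finset.sum_sub_distrib, sum_sq, sum_id]
  ring

lemma ee_qInt (m : ℕ) (hm : m ≠ 0) : ee (qInt m) = ((m : ℚ) - 1) / 2 := by
  have : (m : ℚ) ≠ 0 := Nat.cast_ne_zero.2 hm
  rw [ee, qInt_eval, qInt_d1]; field_simp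

lemma vv_qInt (m : ℕ) (hm : m ≠ 0) : vv (qInt m) = ((m : ℚ) ^ 2 - 1) / 12 := by
  have : (m : ℚ) ≠ 0 := Nat.cast_ne_zero.2 hm
  rw [vv, ee_qInt m hm, qInt_eval, qInt_d2]; field_simp; ring

lemma qInt_eval_ne (j : ℕ) : (qInt (j + 1)).eval 1 ≠ 0 := by
  rw [qInt_eval]; positivity

lemma qFactorial_eval_ne (m : ℕ) : (qFactorial m).eval 1 ≠ 0 := by
  rw [qFactorial, eval_prod]
  exact Finset.prod_ne_zero_iff.2 fun j _ => qInt_eval_ne j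

lemma ee_qFactorial (m : ℕ) : ee (qFactorial m) = (m : ℚ) * ((m : ℚ) - 1) / 4 := by
  rw [qFactorial, ee_prod m _ fun i => qInt_eval_ne i]
  calc ∑ j ∈ Finset.range m, ee (qInt (j + 1))
      = ∑ j ∈ Finset.range m, (0 + (1/2 : ℚ) * j + 0 * (j:ℚ)^2 + 0 * (j:ℚ)^3) := by
        refine Finset.sum_congr rfl fun j _ => ?_
        rw [ee_qInt (j+1) (Nat.succ_ne_zero j)]; push_cast; ring
    _ = (m : ℚ) * ((m : ℚ) - 1) / 4 := by rw [sum_poly3]; ring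

lemma vv_qFactorial (m : ℕ) : vv (qFactorial m)
    = (m : ℚ) * ((m : ℚ) - 1) * (2 * (m : ℚ) + 5) / 72 := by
  rw [qFactorial, vv_prod m _ fun i => qInt_eval_ne i]
  calc ∑ j ∈ Finset.range m, vv (qInt (j + 1))
      = ∑ j ∈ Finset.range m, (0 + (1/6 : ℚ) * j + (1/12) * (j:ℚ)^2 + 0 * (j:ℚ)^3) := by
        refine Finset.sum_congr rfl fun j _ => ?_
        rw [vv_qInt (j+1) (Nat.succ_ne_zero j)]; push_cast; ring
    _ = _ := by rw [sum_poly3]; ring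

theorem stmt_12 (n : ℕ) (hn : 0 < n) (F : Polynomial ℚ)
    (hF : F * ∏ i ∈ Finset.range n, qFactorial (n + i)
        = ∏ i ∈ Finset.range n, qFactorial (3 * i + 1))
    (hpos : ∀ j, 0 ≤ F.coeff j) :
    polyExp F = (n : ℚ) * ((n : ℚ) ^ 2 - 1) / 6 ∧
    polyVar F = (n : ℚ) ^ 2 * ((n : ℚ) ^ 2 - 1) / 12 := by
  set A : Polynomial ℚ := ∏ i ∈ Finset.range n, qFactorial (n + i) with hA_def
  set B : Polynomial ℚ := ∏ i ∈ Finset.range n, qFactorial (3 * i + 1) with hB_def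
  have hA : A.eval 1 ≠ 0 := by
    rw [hA_def, eval_prod]
    exact Finset.prod_ne_zero_iff.2 fun i _ => qFactorial_eval_ne _
  have hB : B.eval 1 ≠ 0 := by
    rw [hB_def, eval_prod]
    exact Finset.prod_ne_zero_iff.2 fun i _ => qFactorial_eval_ne _
  have hFe : F.eval 1 ≠ 0 := by
    intro h
    apply hB
    rw [← hF, eval_mul, h, zero_mul]
  -- expectations
  have heeA : ee A = ∑ i ∈ Finset.range n,
      (((n:ℚ)^2 - n)/4 + ((2*(n:ℚ) - 1)/4) * i + (1/4) * (i:ℚ)^2 + 0 * (i:ℚ)^3) := by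
    rw [hA_def, ee_prod n _ fun i => qFactorial_eval_ne _]
    refine Finset.sum_congr rfl fun i _ => ?_
    rw [ee_qFactorial]; push_cast; ring
  have heeB : ee B = ∑ i ∈ Finset.range n,
      ((0:ℚ) + (3/4) * i + (9/4) * (i:ℚ)^2 + 0 * (i:ℚ)^3) := by
    rw [hB_def, ee_prod n _ fun i => qFactorial_eval_ne _]
    refine Finset.sum_congr rfl fun i _ => ?_
    rw [ee_qFactorial]; push_cast; ring
  have hvvA : vv A = ∑ i ∈ Finset.range n,
      ((2*(n:ℚ)^3 + 3*(n:ℚ)^2 - 5*n)/72 + ((6*(n:ℚ)^2 + 6*n - 5)/72) * i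
        + ((6*(n:ℚ) + 3)/72) * (i:ℚ)^2 + (2/72) * (i:ℚ)^3) := by
    rw [hA_def, vv_prod n _ fun i => qFactorial_eval_ne _]
    refine Finset.sum_congr rfl fun i _ => ?_
    rw [vv_qFactorial]; push_cast; ring
  have hvvB : vv B = ∑ i ∈ Finset.range n,
      ((0:ℚ) + (21/72) * i + (81/72) * (i:ℚ)^2 + (54/72) * (i:ℚ)^3) := by
    rw [hB_def, vv_prod n _ fun i => qFactorial_eval_ne _]
    refine Finset.sum_congr rfl fun i _ => ?_
    rw [vv_qFactorial]; push_cast; ring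
  have heeF : ee F = ee B - ee A := by
    have := ee_mul F A hFe hA
    rw [hF] at this
    linarith [this]
  have hvvF : vv F = vv B - vv A := by
    have := vv_mul F A hFe hA
    rw [hF] at this
    linarith [this]
  constructor
  · rw [polyExp_eq_ee, heeF, heeA, heeB, sum_poly3, sum_poly3]
    ring
  · rw [polyVar_eq_vv, hvvF, hvvA, hvvB, sum_poly3, sum_poly3]
    ring
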